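/- arXiv:2604.09858 — 2 statements merged into one kernel-verified Lean document; each statement's English description precedes it below -/
import Mathlib

section
/- Let s_i(d) = c_i + a_i·φ(d) for constants c_i, a_i and a fixed function φ with 0 < Var_F(φ) < ∞. Suppose n units are partitioned into n/k groups, treatments within each group drawn from an exchangeable coupling G with marginals F, independently across groups. Then for θ̂ = n^{-1} Σ_i s_i(D_i): 1 - Var_G(θ̂)/Var_{iid}(θ̂) = disp_G(φ) · Q_k(s), where Q_k(s) = 1 - v_Δ(s)/v_iid(s). -/
open MeasureTheory ProbabilityTheory

/-- Covariance of two real random variables under a measure. -/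
noncomputable def covFn {Ω : Type*} [MeasurableSpace Ω] (μ : Measure Ω) (X Y : Ω → ℝ) : ℝ :=
  (∫ ω, X ω * Y ω ∂μ) - (∫ ω, X ω ∂μ) * (∫ ω, Y ω ∂μ)

/-- Correlation of two real random variables under a measure. -/
noncomputable def corrFn {Ω : Type*} [MeasurableSpace Ω] (μ : Measure Ω) (X Y : Ω → ℝ) : ℝ :=
  covFn μ X Y / (Real.sqrt (variance X μ) * Real.sqrt (variance Y μ))

lemma memL2_mul_integrable {Ω : Type*} [MeasurableSpace Ω] {μ : Measure Ω} {X Y : Ω → ℝ}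
    (hX : MemLp X 2 μ) (hY : MemLp Y 2 μ) : Integrable (fun ω => X ω * Y ω) μ := by
  have h : MemLp (X • Y) 1 μ := hY.smul hX
  rw [← memLp_one_iff_integrable]
  simpa [Pi.smul_apply, smul_eq_mul, Pi.mul_def] using h

lemma var_expand {Ω : Type*} [MeasurableSpace Ω] (μ : Measure Ω) [IsProbabilityMeasure μ]
    {ι : Type*} [Fintype ι] (X : ι → Ω → ℝ) (hX : ∀ i, MemLp (X i) 2 μ) (b : ι → ℝ) (C0 : ℝ) :
    variance (fun ω => C0 + ∑ i, b i * X i ω) μ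
      = ∑ i, ∑ j, b i * b j * covFn μ (X i) (X j) := by
  have hIntX : ∀ i, Integrable (X i) μ := fun i => (hX i).integrable one_le_two
  have hIntM : ∀ i j, Integrable (fun ω => X i ω * X j ω) μ :=
    fun i j => memL2_mul_integrable (hX i) (hX j)
  have hS : MemLp (fun ω => ∑ i, b i * X i ω) 2 μ := by
    have h := memLp_finset_sum' (μ := μ) (p := 2) Finset.univ
      (f := fun i => fun ω => b i * X i ω) (fun i _ => ((hX i).const_mul (b i)))
    have he : (∑ i, fun ω => b i * X i ω) = (fun ω => ∑ i, b i * X i ω) := by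
      funext ω; simp
    rwa [he] at h
  have hmem : MemLp (fun ω => C0 + ∑ i, b i * X i ω) 2 μ := (memLp_const C0).add hS
  rw [variance_eq_sub hmem]
  have hsq : ∀ ω, (C0 + ∑ i, b i * X i ω) ^ 2
      = C0 ^ 2 + (2 * C0) * (∑ i, b i * X i ω)
        + ∑ i, ∑ j, (b i * b j) * (X i ω * X j ω) := by
    intro ω
    have h1 : (∑ i, b i * X i ω) * (∑ j, b j * X j ω)
        = ∑ i, ∑ j, (b i * b j) * (X i ω * X j ω) := by
      rw [Finset.sum_mul_sum]
      exact Finset.sum_congr rfl fun i _ => Finset.sum_congr rfl fun j _ => by ring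
    rw [add_sq, sq (∑ i, b i * X i ω), h1]
  have hE : (∫ ω, (C0 + ∑ i, b i * X i ω) ∂μ) = C0 + ∑ i, b i * (∫ ω, X i ω ∂μ) := by
    rw [integral_add (integrable_const _)
      (integrable_finset_sum _ (fun i _ => (hIntX i).const_mul _)),
      integral_finset_sum _ (fun i _ => (hIntX i).const_mul _)]
    simp [integral_const_mul]
  have I2 : (∫ ω, (2 * C0) * (∑ i, b i * X i ω) ∂μ)
      = (2 * C0) * ∑ i, b i * (∫ ω, X i ω ∂μ) := by
    rw [integral_const_mul, integral_finset_sum _ (fun i _ => (hIntX i).const_mul _)]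
    simp [integral_const_mul]
  have I3 : (∫ ω, (∑ i, ∑ j, (b i * b j) * (X i ω * X j ω)) ∂μ)
      = ∑ i, ∑ j, (b i * b j) * (∫ ω, X i ω * X j ω ∂μ) := by
    rw [integral_finset_sum _ (fun i _ =>
      integrable_finset_sum _ (fun j _ => (hIntM i j).const_mul _))]
    refine Finset.sum_congr rfl fun i _ => ?_
    rw [integral_finset_sum _ (fun j _ => (hIntM i j).const_mul _)]
    exact Finset.sum_congr rfl fun j _ => integral_const_mul _ _
  have hE2 : (∫ ω, (C0 + ∑ i, b i * X i ω) ^ 2 ∂μ)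
      = C0 ^ 2 + (2 * C0) * (∑ i, b i * (∫ ω, X i ω ∂μ))
        + ∑ i, ∑ j, (b i * b j) * (∫ ω, X i ω * X j ω ∂μ) := by
    simp_rw [hsq]
    have hg1 : Integrable (fun ω => (2 * C0) * (∑ i, b i * X i ω)) μ :=
      (integrable_finset_sum _ (fun i _ => (hIntX i).const_mul _)).const_mul _
    have hf : Integrable (fun ω => C0 ^ 2 + (2 * C0) * (∑ i, b i * X i ω)) μ :=
      (integrable_const _).add hg1
    have hg : Integrable (fun ω => ∑ i, ∑ j, (b i * b j) * (X i ω * X j ω)) μ :=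
      integrable_finset_sum _ (fun i _ =>
        integrable_finset_sum _ (fun j _ => (hIntM i j).const_mul _))
    rw [integral_add hf hg, integral_add (integrable_const _) hg1, I2, I3]
    simp
  simp only [Pi.pow_apply]
  rw [hE2, hE]
  have hEsq : (C0 + ∑ i, b i * (∫ ω, X i ω ∂μ)) ^ 2
      = C0 ^ 2 + (2 * C0) * (∑ i, b i * (∫ ω, X i ω ∂μ))
        + ∑ i, ∑ j, (b i * b j) * ((∫ ω, X i ω ∂μ) * (∫ ω, X j ω ∂μ)) := by
    have h1 : (∑ i, b i * (∫ ω, X i ω ∂μ)) * (∑ j, b j * (∫ ω, X j ω ∂μ))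
        = ∑ i, ∑ j, (b i * b j) * ((∫ ω, X i ω ∂μ) * (∫ ω, X j ω ∂μ)) := by
      rw [Finset.sum_mul_sum]
      exact Finset.sum_congr rfl fun i _ => Finset.sum_congr rfl fun j _ => by ring
    rw [add_sq, sq (∑ i, b i * (∫ ω, X i ω ∂μ)), h1]
  rw [hEsq, add_sub_add_left_eq_sub, ← Finset.sum_sub_distrib]
  refine Finset.sum_congr rfl fun i _ => ?_
  rw [← Finset.sum_sub_distrib]
  refine Finset.sum_congr rfl fun j _ => ?_
  simp only [covFn]; ring

lemma sum_helper {k : ℕ} (f : Fin k → ℝ) (u v : ℝ) :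
    ∑ i, (u * (f i * ∑ j, f j) + v * (f i) ^ 2)
      = u * (∑ i, f i) ^ 2 + v * ∑ i, (f i) ^ 2 := by
  rw [Finset.sum_add_distrib, ← Finset.mul_sum, ← Finset.mul_sum, ← Finset.sum_mul]
  ring

lemma sq_diff_sum {k : ℕ} (f : Fin k → ℝ) :
    ∑ i, ∑ j, (f i - f j) ^ 2
      = 2 * (k : ℝ) * (∑ i, (f i) ^ 2) - 2 * (∑ i, f i) ^ 2 := by
  have h : ∀ i j : Fin k, (f i - f j) ^ 2
      = (f i) ^ 2 - 2 * (f i * f j) + (f j) ^ 2 := fun i j => by ring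
  simp_rw [h, Finset.sum_add_distrib, Finset.sum_sub_distrib, ← Finset.mul_sum,
    Finset.sum_const, Finset.card_univ, Fintype.card_fin, nsmul_eq_mul,
    ← Finset.sum_mul]
  rw [← Finset.mul_sum]
  ring

/-- Theorem: Relative Efficiency, parametric case: With influence
functions `s_{gi}(d) = c_{gi} + a_{gi}·φ(d)`, units in `m` groups of size `k`,
treatments within each group drawn from an exchangeable coupling with marginals `F` and
common pairwise correlation `ρ = Corr_G(φ(D_1),φ(D_2))` (so `Cov = ρ·Var_F(φ)`),
independently across groups, the estimator `θ̂ = n⁻¹ Σ s_i(D_i)` (with `n = m·k`)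
satisfies `1 - Var_G(θ̂)/Var_iid(θ̂) = disp_G(φ) · Q_k(s)` where
`disp_G(φ) = -(k-1)ρ` and `Q_k(s) = 1 - v_Δ(s)/v_iid(s)`. -/
theorem stmt7 {Ω : Type*} [MeasurableSpace Ω] (μ : Measure Ω) [IsProbabilityMeasure μ]
    (m k : ℕ) (hm : 1 ≤ m) (hk : 2 ≤ k)
    (D : Fin m → Fin k → Ω → ℝ) (hD : ∀ g i, Measurable (D g i))
    (F : Measure ℝ) [IsProbabilityMeasure F]
    (hmarg : ∀ g i, μ.map (D g i) = F)
    (hexch : ∀ g, ∀ σ : Equiv.Perm (Fin k),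
      μ.map (fun ω => fun i => D g (σ i) ω) = μ.map (fun ω => fun i => D g i ω))
    (hindep : iIndepFun
      (fun g => fun ω => fun i => D g i ω) μ)
    (φ : ℝ → ℝ) (hφ : Measurable φ) (hL2 : MemLp φ 2 F)
    (hvar : 0 < variance φ F)
    (ρ : ℝ)
    (hρ : ∀ g, ∀ i j : Fin k, i ≠ j →
      covFn μ (fun ω => φ (D g i ω)) (fun ω => φ (D g j ω)) = ρ * variance φ F)
    (c a : Fin m → Fin k → ℝ)
    (hviid : 0 < ((m * k : ℕ) : ℝ)⁻¹ * ∑ g, ∑ i, (a g i) ^ 2 * variance φ F) :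
    1 -
        variance
            (fun ω => ((m * k : ℕ) : ℝ)⁻¹ * ∑ g, ∑ i, (c g i + a g i * φ (D g i ω))) μ /
          ((((m * k : ℕ) : ℝ)⁻¹ * ∑ g, ∑ i, (a g i) ^ 2 * variance φ F) / ((m * k : ℕ) : ℝ)) =
      (-(((k : ℝ) - 1) * ρ)) *
        (1 -
          ((2 * ((m * k : ℕ) : ℝ) * ((k : ℝ) - 1))⁻¹ *
              ∑ g, ∑ i, ∑ j,
                (if i = j then 0 else (a g i - a g j) ^ 2 * variance φ F)) /
            (((m * k : ℕ) : ℝ)⁻¹ * ∑ g, ∑ i, (a g i) ^ 2 * variance φ F)) := by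
  set n : ℝ := ((m * k : ℕ) : ℝ) with hn_def
  set V : ℝ := variance φ F with hV_def
  set A : ℝ := ∑ g, (∑ i, a g i) ^ 2 with hA_def
  set B : ℝ := ∑ g, ∑ i, (a g i) ^ 2 with hB_def
  have hn : (0 : ℝ) < n := by
    have h : 0 < m * k := Nat.mul_pos hm (by omega)
    rw [hn_def]
    exact_mod_cast h
  have hn0 : n ≠ 0 := ne_of_gt hn
  have hk1 : ((k : ℝ) - 1) ≠ 0 := by
    have : (2 : ℝ) ≤ (k : ℝ) := by exact_mod_cast hk
    linarith
  -- L2 membership of φ ∘ D g i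
  have hX2 : ∀ g i, MemLp (fun ω => φ (D g i ω)) 2 μ := by
    intro g i
    have h1 : MemLp φ 2 (μ.map (D g i)) := by rw [hmarg g i]; exact hL2
    exact (memLp_map_measure_iff hφ.aestronglyMeasurable (hD g i).aemeasurable).mp h1
  -- covariance values
  have hdiag : ∀ g i, covFn μ (fun ω => φ (D g i ω)) (fun ω => φ (D g i ω)) = V := by
    intro g i
    have h1 : (∫ ω, φ (D g i ω) * φ (D g i ω) ∂μ) = ∫ x, φ x * φ x ∂F := by
      rw [← hmarg g i, integral_map (hD g i).aemeasurable (f := fun x => φ x * φ x)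
        ((hφ.mul hφ).aestronglyMeasurable)]
    have h2 : (∫ ω, φ (D g i ω) ∂μ) = ∫ x, φ x ∂F := by
      rw [← hmarg g i, integral_map (hD g i).aemeasurable hφ.aestronglyMeasurable]
    rw [hV_def, variance_eq_sub hL2]
    simp only [covFn, h1, h2, Pi.pow_apply, sq]
  have hzero : ∀ g g', g ≠ g' → ∀ i j,
      covFn μ (fun ω => φ (D g i ω)) (fun ω => φ (D g' j ω)) = 0 := by
    intro g g' hgg' i j
    have hind : IndepFun (fun ω => φ (D g i ω)) (fun ω => φ (D g' j ω)) μ :=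
      (hindep.indepFun hgg').comp
        (hφ.comp (measurable_pi_apply i)) (hφ.comp (measurable_pi_apply j))
    have h := hind.integral_mul_eq_mul_integral (hφ.comp (hD g i)).aestronglyMeasurable
      (hφ.comp (hD g' j)).aestronglyMeasurable
    simp only [covFn]
    rw [sub_eq_zero]
    exact h
  -- rewrite the estimator
  have hfun : (fun ω => n⁻¹ * ∑ g, ∑ i, (c g i + a g i * φ (D g i ω)))
      = (fun ω => (n⁻¹ * ∑ g, ∑ i, c g i)
          + ∑ p : Fin m × Fin k, (n⁻¹ * a p.1 p.2) * φ (D p.1 p.2 ω)) := by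
    funext ω
    rw [Fintype.sum_prod_type]
    simp_rw [Finset.sum_add_distrib, mul_add, Finset.mul_sum, mul_assoc]
  -- variance computation
  have hVar : variance (fun ω => n⁻¹ * ∑ g, ∑ i, (c g i + a g i * φ (D g i ω))) μ
      = n⁻¹ * n⁻¹ * (ρ * V * A + (V - ρ * V) * B) := by
    rw [hfun, var_expand (ι := Fin m × Fin k) μ (fun p ω => φ (D p.1 p.2 ω))
      (fun p => hX2 p.1 p.2) (fun p => n⁻¹ * a p.1 p.2) _]
    rw [Fintype.sum_prod_type]
    have hinner : ∀ g i, (∑ q : Fin m × Fin k,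
        (n⁻¹ * a g i) * (n⁻¹ * a q.1 q.2) *
          covFn μ (fun ω => φ (D g i ω)) (fun ω => φ (D q.1 q.2 ω)))
        = n⁻¹ * n⁻¹ * (ρ * V * (a g i * ∑ j, a g j) + (V - ρ * V) * (a g i) ^ 2) := by
      intro g i
      rw [Fintype.sum_prod_type]
      rw [Finset.sum_eq_single g (fun g' _ hg' => Finset.sum_eq_zero fun j _ => by
        simp [hzero g g' (Ne.symm hg') i j]) (by simp)]
      have hcg : ∀ j, covFn μ (fun ω => φ (D g i ω)) (fun ω => φ (D g j ω))
          = ρ * V + (if i = j then V - ρ * V else 0) := by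
        intro j
        by_cases h : i = j
        · subst h; rw [hdiag]; simp
        · rw [hρ g i j h, hV_def]; simp [h]
      simp_rw [hcg, mul_add, Finset.sum_add_distrib, mul_ite, mul_zero,
        Finset.sum_ite_eq, Finset.mem_univ, if_true]
      have hs : (∑ x, n⁻¹ * a g i * (n⁻¹ * a g x) * (ρ * V))
          = (n⁻¹ * a g i * n⁻¹ * (ρ * V)) * ∑ x, a g x := by
        rw [Finset.mul_sum]
        exact Finset.sum_congr rfl fun x _ => by ring
      rw [hs]
      ring
    simp_rw [hinner]
    have := sum_helper (k := k)
    have hout : ∀ g, (∑ i, n⁻¹ * n⁻¹ *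
        (ρ * V * (a g i * ∑ j, a g j) + (V - ρ * V) * (a g i) ^ 2))
        = n⁻¹ * n⁻¹ * (ρ * V * (∑ i, a g i) ^ 2 + (V - ρ * V) * ∑ i, (a g i) ^ 2) := by
      intro g
      rw [← Finset.mul_sum, sum_helper]
    simp_rw [hout]
    rw [← Finset.mul_sum, Finset.sum_add_distrib, ← Finset.mul_sum, ← Finset.mul_sum]
  -- rewrite statement sums
  have h1 : (∑ g, ∑ i, (a g i) ^ 2 * V) = B * V := by
    rw [hB_def, Finset.sum_mul]
    exact Finset.sum_congr rfl fun g _ => (Finset.sum_mul _ _ _).symm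
  have h2 : (∑ g, ∑ i, ∑ j, (if i = j then (0:ℝ) else (a g i - a g j) ^ 2 * V))
      = (2 * (k : ℝ) * B - 2 * A) * V := by
    have hdrop : ∀ g, (∑ i, ∑ j, (if i = j then (0:ℝ) else (a g i - a g j) ^ 2 * V))
        = ∑ i, ∑ j, (a g i - a g j) ^ 2 * V := by
      intro g
      refine Finset.sum_congr rfl fun i _ => Finset.sum_congr rfl fun j _ => ?_
      by_cases h : i = j
      · subst h; simp
      · simp [h]
    simp_rw [hdrop]
    have hper : ∀ g, (∑ i, ∑ j, (a g i - a g j) ^ 2 * V)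
        = (2 * (k : ℝ) * (∑ i, (a g i) ^ 2) - 2 * (∑ i, a g i) ^ 2) * V := by
      intro g
      rw [← sq_diff_sum (fun i => a g i), Finset.sum_mul]
      exact Finset.sum_congr rfl fun i _ => (Finset.sum_mul _ _ _).symm
    simp_rw [hper]
    rw [← Finset.sum_mul, Finset.sum_sub_distrib, ← Finset.mul_sum, ← Finset.mul_sum,
      hA_def, hB_def]
  have hBV : 0 < B * V := by
    rw [h1] at hviid
    have h := mul_pos hn hviid
    rwa [← mul_assoc, mul_inv_cancel₀ hn0, one_mul] at h
  have hB : 0 < B := by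
    by_contra h
    push_neg at h
    nlinarith
  rw [hVar, h1, h2]
  have hV0 : V ≠ 0 := ne_of_gt hvar
  field_simp
  ring
end

section
/- Let F = Uniform[0,1] and for k ≥ 2 let E_c be the 1/k-cyclic subspace. For any s ∈ L²(F) of bounded variation, the cyclic projection s^c(x) = k^{-1} Σ_{l=1}^k s(x ⊕ l/k) - E_F[s] satisfies sup_x |s^c(x)| ≤ k^{-1}·V_{[0,1]}(s), and hence Var_F(s^c) ≤ k^{-2}·V_{[0,1]}(s)². -/
open MeasureTheory ProbabilityTheory

/-- Addition modulo 1. -/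
noncomputable def addMod (a b : ℝ) : ℝ := Int.fract (a + b)

/-- Uniform measure on `[0,1]`. -/
noncomputable def unif01 : Measure ℝ := volume.restrict (Set.Icc (0 : ℝ) 1)

/-- The cyclic projection `s^c(x) = k⁻¹ Σ_{l=1}^k s(x ⊕ l/k) - E_F[s]`. -/
noncomputable def cycProj (k : ℕ) (s : ℝ → ℝ) : ℝ → ℝ :=
  fun x => (k : ℝ)⁻¹ * ∑ l ∈ Finset.Icc 1 k, s (addMod x ((l : ℝ) / k)) - ∫ t, s t ∂unif01

lemma mr_spec (k : ℕ) (hk : 1 ≤ k) {u : ℝ} (hu0 : 0 ≤ u) (hu1 : u < 1) :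
    0 ≤ u - ((⌊u * k⌋.toNat : ℕ) : ℝ)/k ∧ u - ((⌊u * k⌋.toNat : ℕ) : ℝ)/k < 1/k := by
  have hk0 : (0:ℝ) < k := by exact_mod_cast hk
  have hmf : ((⌊u * k⌋.toNat : ℕ) : ℝ) = ⌊u * k⌋ := by
    exact_mod_cast Int.toNat_of_nonneg (Int.floor_nonneg.mpr (by positivity))
  have h1 : ((⌊u * k⌋.toNat : ℕ) : ℝ) ≤ u * k := by rw [hmf]; exact Int.floor_le _
  have h2 : u * k < ((⌊u * k⌋.toNat : ℕ) : ℝ) + 1 := by rw [hmf]; exact Int.lt_floor_add_one _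
  constructor
  · rw [sub_nonneg, div_le_iff₀ hk0]; linarith
  · rw [sub_lt_iff_lt_add, ← add_div, lt_div_iff₀ hk0]; linarith

lemma fract_key (k : ℕ) (hk : 1 ≤ k) {u : ℝ} (hu0 : 0 ≤ u) (hu1 : u < 1) (l : ℕ) :
    Int.fract (u + (l : ℝ) / k) =
      (((⌊u * k⌋.toNat + l) % k : ℕ) : ℝ) / k + (u - ((⌊u * k⌋.toNat : ℕ) : ℝ) / k) := by
  have hk0 : (0:ℝ) < k := by exact_mod_cast hk
  set m : ℕ := ⌊u * k⌋.toNat with hm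
  obtain ⟨hr0, hr1⟩ := mr_spec k hk hu0 hu1
  set r : ℝ := u - (m:ℝ)/k with hr
  set j : ℕ := (m + l) % k with hj
  set q : ℕ := (m + l) / k with hq
  have hqj : m + l = k * q + j := (Nat.div_add_mod _ _).symm
  have hcast : (m:ℝ) + l = k * q + j := by exact_mod_cast congrArg (Nat.cast : ℕ → ℝ) hqj
  have hjk : j < k := Nat.mod_lt _ (by omega)
  have key : u + (l:ℝ)/k = (q:ℝ) + ((j:ℝ)/k + r) := by
    rw [hr]; field_simp; linarith [hcast]
  rw [key, Int.fract_natCast_add, Int.fract_eq_self.mpr]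
  constructor
  · positivity
  · have e1 : (j:ℝ)/k + 1/k ≤ 1 := by
      rw [← add_div, div_le_one hk0]
      exact_mod_cast hjk
    linarith

lemma sum_shift (k m : ℕ) (hk : 1 ≤ k) (g : ℕ → ℝ) :
    ∑ l ∈ Finset.Icc 1 k, g ((m + l) % k) = ∑ j ∈ Finset.range k, g j := by
  have hinj : ∀ l1 ∈ Finset.Icc 1 k, ∀ l2 ∈ Finset.Icc 1 k,
      (m + l1) % k = (m + l2) % k → l1 = l2 := by
    intro l1 h1 l2 h2 h
    simp only [Finset.mem_Icc] at h1 h2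
    have hmod : l1 % k = l2 % k := Nat.ModEq.add_left_cancel' m h
    rcases eq_or_lt_of_le h1.2 with rfl | hl1
    · rcases eq_or_lt_of_le h2.2 with h' | hl2
      · omega
      · rw [Nat.mod_self, Nat.mod_eq_of_lt hl2] at hmod; omega
    · rcases eq_or_lt_of_le h2.2 with rfl | hl2
      · rw [Nat.mod_eq_of_lt hl1, Nat.mod_self] at hmod; omega
      · rw [Nat.mod_eq_of_lt hl1, Nat.mod_eq_of_lt hl2] at hmod; exact hmod
  have himg : (Finset.Icc 1 k).image (fun l => (m + l) % k) = Finset.range k := by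
    apply Finset.eq_of_subset_of_card_le
    · intro x hx
      simp only [Finset.mem_image] at hx
      obtain ⟨l, _, rfl⟩ := hx
      exact Finset.mem_range.mpr (Nat.mod_lt _ (by omega))
    · rw [Finset.card_range, Finset.card_image_of_injOn (fun a ha b hb => hinj a ha b hb),
        Nat.card_Icc]
      omega
  rw [← himg, Finset.sum_image hinj]

lemma var_telescope (s : ℝ → ℝ) (k : ℕ) (hk : 1 ≤ k) (n : ℕ) :
    ∑ j ∈ Finset.range n, eVariationOn s (Set.Icc ((j:ℝ)/k) (((j:ℝ)+1)/k))
      = eVariationOn s (Set.Icc 0 ((n:ℝ)/k)) := by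
  have hk0 : (0:ℝ) < k := by exact_mod_cast hk
  induction n with
  | zero =>
    simp only [Finset.range_zero, Finset.sum_empty, Nat.cast_zero, zero_div, Set.Icc_self]
    exact (eVariationOn.subsingleton s Set.subsingleton_singleton).symm
  | succ n ih =>
    rw [Finset.sum_range_succ, ih]
    have h1 : (0:ℝ) ≤ (n:ℝ)/k := by positivity
    have h2 : (n:ℝ)/k ≤ ((n:ℝ)+1)/k := by gcongr; linarith
    have key := eVariationOn.Icc_add_Icc s (s := (Set.univ : Set ℝ)) h1 h2 (Set.mem_univ _)
    simp only [Set.univ_inter] at key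
    rw [key]
    push_cast
    rfl

lemma dist_le_var (s : ℝ → ℝ) {A : Set ℝ} (hfin : eVariationOn s A ≠ ⊤)
    {p t : ℝ} (hp : p ∈ A) (ht : t ∈ A) :
    |s p - s t| ≤ (eVariationOn s A).toReal := by
  have h := eVariationOn.edist_le s hp ht
  rw [edist_dist, Real.dist_eq] at h
  exact (ENNReal.ofReal_le_iff_le_toReal hfin).mp h

/-- For `F = Uniform[0,1]`, `k ≥ 2`, and `s` of bounded variation on
`[0,1]`, the cyclic projection satisfies `sup_x |s^c(x)| ≤ k⁻¹ V_{[0,1]}(s)`, and hence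
`Var_F(s^c) ≤ k⁻² V_{[0,1]}(s)²`. -/
theorem stmt16 (k : ℕ) (hk : 2 ≤ k) (s : ℝ → ℝ) (hmeas : Measurable s)
    (hBV : BoundedVariationOn s (Set.Icc 0 1)) :
    (∀ x ∈ Set.Icc (0 : ℝ) 1,
      |cycProj k s x| ≤ (k : ℝ)⁻¹ * (eVariationOn s (Set.Icc 0 1)).toReal) ∧
    variance (cycProj k s) unif01 ≤
      ((k : ℝ) ^ 2)⁻¹ * ((eVariationOn s (Set.Icc 0 1)).toReal) ^ 2 := by
  have hk1 : 1 ≤ k := by omega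
  have hk0 : (0:ℝ) < k := by exact_mod_cast hk1
  set V : ENNReal := eVariationOn s (Set.Icc (0:ℝ) 1) with hV
  have hVfin : V ≠ ⊤ := hBV
  set B : ℝ := (k:ℝ)⁻¹ * V.toReal with hB
  have hB0 : 0 ≤ B := by positivity
  haveI : IsProbabilityMeasure unif01 :=
    ⟨by simp [unif01, Real.volume_Icc]⟩
  -- integrability of s on [0,1]
  have hsInt : IntegrableOn s (Set.Icc (0:ℝ) 1) volume := by
    apply Measure.integrableOn_of_bounded (M := |s 0| + V.toReal)
    · simp [Real.volume_Icc]
    · exact hmeas.aestronglyMeasurable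
    · filter_upwards [ae_restrict_mem measurableSet_Icc] with t ht
      have h0 : (0:ℝ) ∈ Set.Icc (0:ℝ) 1 := ⟨le_refl 0, zero_le_one⟩
      have := dist_le_var s hVfin ht h0
      calc ‖s t‖ = |s t| := rfl
        _ ≤ |s 0| + |s t - s 0| := by
            have := abs_sub_abs_le_abs_sub (s t) (s 0); linarith [abs_nonneg (s t - s 0)]
        _ ≤ |s 0| + V.toReal := by rw [hV]; linarith [this]
  have hII : ∀ i, i < k → IntervalIntegrable s volume ((i:ℝ)/k) (((i:ℝ)+1)/k) := by
    intro i hi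
    have hab : (i:ℝ)/k ≤ ((i:ℝ)+1)/k := by gcongr; linarith
    rw [intervalIntegrable_iff_integrableOn_Ioc_of_le hab]
    apply hsInt.mono_set
    intro t ht
    have hik : (i:ℝ) + 1 ≤ k := by exact_mod_cast hi
    have h1 : (0:ℝ) ≤ (i:ℝ)/k := by positivity
    have h2 : ((i:ℝ)+1)/k ≤ 1 := by rw [div_le_one hk0]; linarith
    exact ⟨le_trans h1 ht.1.le, le_trans ht.2 h2⟩
  -- split of the integral
  have hsplit : ∫ t, s t ∂unif01
      = ∑ j ∈ Finset.range k, ∫ t in ((j:ℝ)/k)..(((j:ℝ)+1)/k), s t := by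
    have h1 : ∫ t, s t ∂unif01 = ∫ t in (0:ℝ)..1, s t := by
      rw [unif01, intervalIntegral.integral_of_le zero_le_one]
      exact integral_Icc_eq_integral_Ioc
    have h2 := intervalIntegral.sum_integral_adjacent_intervals
      (a := fun j : ℕ => (j:ℝ)/k) (μ := volume) (n := k)
      (fun i hi => by push_cast; exact hII i hi)
    simp only [Nat.cast_add, Nat.cast_one, Nat.cast_zero, zero_div] at h2
    rw [div_self hk0.ne'] at h2
    rw [h1, ← h2]
  -- main pointwise bound
  have main : ∀ x ∈ Set.Icc (0:ℝ) 1, |cycProj k s x| ≤ B := by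
    intro x hx
    set u : ℝ := if x = 1 then 0 else x with hu
    have hu0 : 0 ≤ u := by rw [hu]; split_ifs with h; exacts [le_refl 0, hx.1]
    have hu1 : u < 1 := by
      rw [hu]; split_ifs with h; exacts [one_pos, lt_of_le_of_ne hx.2 h]
    have hfr : ∀ l : ℕ, Int.fract (x + (l:ℝ)/k) = Int.fract (u + (l:ℝ)/k) := by
      intro l
      rw [hu]; split_ifs with h
      · rw [h, Int.fract_one_add, zero_add]
      · rfl
    set m : ℕ := ⌊u * k⌋.toNat with hm
    set r : ℝ := u - (m:ℝ)/k with hr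
    obtain ⟨hr0, hr1⟩ := mr_spec k hk1 hu0 hu1
    rw [← hm, ← hr] at hr0 hr1
    have hpt : ∀ l : ℕ, addMod x ((l:ℝ)/k) = (((m + l) % k : ℕ):ℝ)/k + r := by
      intro l
      rw [addMod, hfr l, fract_key k hk1 hu0 hu1 l, ← hm, ← hr]
    have hsum : ∑ l ∈ Finset.Icc 1 k, s (addMod x ((l:ℝ)/k))
        = ∑ j ∈ Finset.range k, s ((j:ℝ)/k + r) := by
      rw [Finset.sum_congr rfl (fun l _ => by rw [hpt l])]
      exact sum_shift k m hk1 (fun j => s ((j:ℝ)/k + r))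
    have hcyc : cycProj k s x = ∑ j ∈ Finset.range k,
        ((k:ℝ)⁻¹ * s ((j:ℝ)/k + r) - ∫ t in ((j:ℝ)/k)..(((j:ℝ)+1)/k), s t) := by
      simp only [cycProj]
      rw [hsum, hsplit, Finset.mul_sum, Finset.sum_sub_distrib]
    rw [hcyc]
    have termbound : ∀ j ∈ Finset.range k,
        |(k:ℝ)⁻¹ * s ((j:ℝ)/k + r) - ∫ t in ((j:ℝ)/k)..(((j:ℝ)+1)/k), s t|
          ≤ (k:ℝ)⁻¹ * (eVariationOn s (Set.Icc ((j:ℝ)/k) (((j:ℝ)+1)/k))).toReal := by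
      intro j hj
      rw [Finset.mem_range] at hj
      have hjk : (j:ℝ) + 1 ≤ k := by exact_mod_cast hj
      have hab : (j:ℝ)/k ≤ ((j:ℝ)+1)/k := by gcongr; linarith
      have hsub : Set.Icc ((j:ℝ)/k) (((j:ℝ)+1)/k) ⊆ Set.Icc (0:ℝ) 1 := by
        apply Set.Icc_subset_Icc
        · positivity
        · rw [div_le_one hk0]; linarith
      have hfinj : eVariationOn s (Set.Icc ((j:ℝ)/k) (((j:ℝ)+1)/k)) ≠ ⊤ :=
        (lt_of_le_of_lt (eVariationOn.mono s hsub) hBV.lt_top).ne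
      have hba : ((j:ℝ)+1)/k - (j:ℝ)/k = (k:ℝ)⁻¹ := by field_simp; ring
      have hp : (j:ℝ)/k + r ∈ Set.Icc ((j:ℝ)/k) (((j:ℝ)+1)/k) := by
        rw [Set.mem_Icc]
        refine ⟨le_add_of_nonneg_right hr0, ?_⟩
        have e : ((j:ℝ)+1)/k = (j:ℝ)/k + 1/k := by ring
        rw [e]
        exact add_le_add_right hr1.le _
      have heq : (k:ℝ)⁻¹ * s ((j:ℝ)/k + r) - ∫ t in ((j:ℝ)/k)..(((j:ℝ)+1)/k), s t
          = ∫ t in ((j:ℝ)/k)..(((j:ℝ)+1)/k), (s ((j:ℝ)/k + r) - s t) := by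
        rw [intervalIntegral.integral_sub intervalIntegrable_const (hII j hj),
          intervalIntegral.integral_const, hba, smul_eq_mul]
      rw [heq]
      have hbd := intervalIntegral.norm_integral_le_of_norm_le_const
        (C := (eVariationOn s (Set.Icc ((j:ℝ)/k) (((j:ℝ)+1)/k))).toReal)
        (f := fun t => s ((j:ℝ)/k + r) - s t)
        (a := (j:ℝ)/k) (b := ((j:ℝ)+1)/k) ?_
      · calc |∫ t in ((j:ℝ)/k)..(((j:ℝ)+1)/k), (s ((j:ℝ)/k + r) - s t)|
            ≤ (eVariationOn s (Set.Icc ((j:ℝ)/k) (((j:ℝ)+1)/k))).toReal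
              * |((j:ℝ)+1)/k - (j:ℝ)/k| := hbd
          _ = (k:ℝ)⁻¹ * (eVariationOn s (Set.Icc ((j:ℝ)/k) (((j:ℝ)+1)/k))).toReal := by
              rw [hba, abs_of_nonneg (by positivity : (0:ℝ) ≤ (k:ℝ)⁻¹)]; ring
      · intro t ht
        rw [Set.uIoc_of_le hab] at ht
        exact dist_le_var s hfinj hp (Set.Ioc_subset_Icc_self ht)
    calc |∑ j ∈ Finset.range k,
        ((k:ℝ)⁻¹ * s ((j:ℝ)/k + r) - ∫ t in ((j:ℝ)/k)..(((j:ℝ)+1)/k), s t)|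
        ≤ ∑ j ∈ Finset.range k,
          |(k:ℝ)⁻¹ * s ((j:ℝ)/k + r) - ∫ t in ((j:ℝ)/k)..(((j:ℝ)+1)/k), s t| :=
          Finset.abs_sum_le_sum_abs _ _
      _ ≤ ∑ j ∈ Finset.range k,
          (k:ℝ)⁻¹ * (eVariationOn s (Set.Icc ((j:ℝ)/k) (((j:ℝ)+1)/k))).toReal :=
          Finset.sum_le_sum termbound
      _ = (k:ℝ)⁻¹ * ∑ j ∈ Finset.range k,
          (eVariationOn s (Set.Icc ((j:ℝ)/k) (((j:ℝ)+1)/k))).toReal := by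
          rw [Finset.mul_sum]
      _ = (k:ℝ)⁻¹ * (∑ j ∈ Finset.range k,
          eVariationOn s (Set.Icc ((j:ℝ)/k) (((j:ℝ)+1)/k))).toReal := by
          rw [ENNReal.toReal_sum]
          intro j hj
          rw [Finset.mem_range] at hj
          have hjk : (j:ℝ) + 1 ≤ k := by exact_mod_cast hj
          have hsub : Set.Icc ((j:ℝ)/k) (((j:ℝ)+1)/k) ⊆ Set.Icc (0:ℝ) 1 := by
            apply Set.Icc_subset_Icc
            · positivity
            · rw [div_le_one hk0]; linarith
          exact (lt_of_le_of_lt (eVariationOn.mono s hsub) hBV.lt_top).ne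
      _ = B := by
          rw [var_telescope s k hk1 k, div_self hk0.ne', hB, hV]
  refine ⟨fun x hx => main x hx, ?_⟩
  -- variance bound
  have hmeasc : Measurable (cycProj k s) := by
    unfold cycProj addMod
    apply Measurable.sub _ measurable_const
    apply Measurable.const_mul
    apply Finset.measurable_sum
    intro l _
    exact hmeas.comp (measurable_fract.comp (measurable_id.add_const _))
  have hae : ∀ᵐ x ∂unif01, x ∈ Set.Icc (0:ℝ) 1 := ae_restrict_mem measurableSet_Icc
  have h2 : variance (cycProj k s) unif01 ≤ ∫ x, (cycProj k s x)^2 ∂unif01 := by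
    have := variance_le_expectation_sq (μ := unif01) hmeasc.aestronglyMeasurable
    simpa using this
  have h3 : ∫ x, (cycProj k s x)^2 ∂unif01 ≤ B^2 := by
    have hbd : ∀ᵐ x ∂unif01, (cycProj k s x)^2 ≤ B^2 := by
      filter_upwards [hae] with x hx
      calc (cycProj k s x)^2 = |cycProj k s x|^2 := (sq_abs _).symm
        _ ≤ B^2 := by
            apply pow_le_pow_left₀ (abs_nonneg _) (main x hx)
    have hint : Integrable (fun x => (cycProj k s x)^2) unif01 := by
      apply (integrable_const (B^2)).mono' ((hmeasc.pow_const 2).aestronglyMeasurable)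
      filter_upwards [hbd] with x hx
      rw [Real.norm_eq_abs, abs_of_nonneg (sq_nonneg _)]
      exact hx
    calc ∫ x, (cycProj k s x)^2 ∂unif01 ≤ ∫ _, B^2 ∂unif01 :=
        integral_mono_ae hint (integrable_const _) hbd
      _ = B^2 := by simp
  calc variance (cycProj k s) unif01 ≤ B^2 := h2.trans h3
    _ = ((k:ℝ)^2)⁻¹ * V.toReal^2 := by rw [hB, mul_pow, inv_pow]
end
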